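/- arXiv:math/0504485 — 7 statements merged into one kernel-verified Lean document; each statement's English description precedes it below -/
import Mathlib

section
/- Let z, s, v be real with 0 < z < 1, let a ≤ b be natural numbers with v + a > 0, and let C = z^a Φ(z,s,v+a) − z^{b+1} Φ(z,s,v+b+1). Then for every natural number x with a ≤ x ≤ b, the cumulative distribution function of the doubly truncated Lerch distribution satisfies Σ_{k=a}^{x} (1/C) · z^k/(v+k)^s = (z^a Φ(z,s,v+a) − z^{x+1} Φ(z,s,v+x+1)) / C. -/
set_option maxHeartbeats 1000000

/-- Lerch's transcendent Φ(z,s,v) = Σ_{n=0}^∞ z^n / (n+v)^s, with real powers. -/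
noncomputable def lerchPhi (z s v : ℝ) : ℝ := ∑' n : ℕ, z ^ n / ((n : ℝ) + v) ^ s

lemma lerch_summable_aux (z s w : ℝ) (hz0 : 0 < z) (hz1 : z < 1) (hw : 0 < w) :
    Summable (fun n : ℕ => z ^ n / (w + (n : ℝ)) ^ s) := by
  obtain ⟨N, hNs⟩ : ∃ N : ℕ, |s| ≤ (N : ℝ) := ⟨⌈|s|⌉₊, Nat.le_ceil _⟩
  obtain ⟨K, hwK⟩ : ∃ K : ℕ, w ≤ (K : ℝ) := ⟨⌈w⌉₊, Nat.le_ceil _⟩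
  have hg : Summable (fun m : ℕ => ((m : ℝ) + K) ^ N * z ^ m) := by
    have h1 : Summable (fun j : ℕ => (j : ℝ) ^ N * z ^ j) :=
      summable_pow_mul_geometric_of_norm_lt_one N
        (by rw [Real.norm_eq_abs, abs_of_pos hz0]; exact hz1)
    have h2 : Summable (fun m : ℕ => ((m + K : ℕ) : ℝ) ^ N * z ^ (m + K)) :=
      (summable_nat_add_iff K).2 h1
    have h3 := h2.mul_left ((z ^ K)⁻¹)
    refine h3.congr fun m => ?_
    have hzK : (z : ℝ) ^ K ≠ 0 := by positivity
    push_cast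
    rw [pow_add]
    field_simp
  have hshift : Summable (fun n : ℕ => z ^ (n + 1) / (w + ((n + 1 : ℕ) : ℝ)) ^ s) := by
    have hg1 : Summable (fun n : ℕ => (((n + 1 : ℕ) : ℝ) + K) ^ N * z ^ (n + 1)) :=
      (summable_nat_add_iff 1).2 hg
    refine Summable.of_nonneg_of_le (fun n => ?_) (fun n => ?_) hg1
    · have h0 : (0 : ℝ) < w + ((n + 1 : ℕ) : ℝ) := by
        have : (0:ℝ) ≤ ((n + 1 : ℕ) : ℝ) := Nat.cast_nonneg _
        linarith
      positivity
    · have ht1 : (1 : ℝ) ≤ w + ((n + 1 : ℕ) : ℝ) := by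
        have : (1:ℝ) ≤ ((n + 1 : ℕ) : ℝ) := by exact_mod_cast Nat.one_le_iff_ne_zero.2 (Nat.succ_ne_zero n)
        linarith
      have ht0 : (0 : ℝ) < w + ((n + 1 : ℕ) : ℝ) := lt_of_lt_of_le one_pos ht1
      have h1 : z ^ (n + 1) / (w + ((n + 1 : ℕ) : ℝ)) ^ s
          = (w + ((n + 1 : ℕ) : ℝ)) ^ (-s) * z ^ (n + 1) := by
        rw [Real.rpow_neg ht0.le, div_eq_mul_inv]; ring
      rw [h1]
      have h2 : (w + ((n + 1 : ℕ) : ℝ)) ^ (-s) ≤ (w + ((n + 1 : ℕ) : ℝ)) ^ (N : ℝ) :=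
        Real.rpow_le_rpow_of_exponent_le ht1 (le_trans (neg_le_abs s) hNs)
      have h3 : (w + ((n + 1 : ℕ) : ℝ)) ^ (N : ℝ) = (w + ((n + 1 : ℕ) : ℝ)) ^ N :=
        Real.rpow_natCast _ N
      have h4 : (w + ((n + 1 : ℕ) : ℝ)) ^ N ≤ (((n + 1 : ℕ) : ℝ) + K) ^ N := by
        apply pow_le_pow_left₀ ht0.le
        linarith
      have hz' : (0 : ℝ) ≤ z ^ (n + 1) := by positivity
      calc (w + ((n + 1 : ℕ) : ℝ)) ^ (-s) * z ^ (n + 1)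
          ≤ (w + ((n + 1 : ℕ) : ℝ)) ^ (N : ℝ) * z ^ (n + 1) :=
            mul_le_mul_of_nonneg_right h2 hz'
        _ = (w + ((n + 1 : ℕ) : ℝ)) ^ N * z ^ (n + 1) := by rw [h3]
        _ ≤ (((n + 1 : ℕ) : ℝ) + K) ^ N * z ^ (n + 1) :=
            mul_le_mul_of_nonneg_right h4 hz'
  exact (summable_nat_add_iff (f := fun n : ℕ => z ^ n / (w + (n : ℝ)) ^ s) 1).1 hshift

/-- C.d.f. of the doubly truncated Lerch distribution. -/
theorem doublyTruncated_cdf (z s v : ℝ) (hz0 : 0 < z) (hz1 : z < 1)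
    (a b : ℕ) (hab : a ≤ b) (hva : v + a > 0) (C : ℝ)
    (hC : C = z ^ a * lerchPhi z s (v + a) - z ^ (b + 1) * lerchPhi z s (v + b + 1))
    (x : ℕ) (hax : a ≤ x) (hxb : x ≤ b) :
    ∑ k ∈ Finset.Icc a x, (1 / C) * (z ^ k / (v + (k : ℝ)) ^ s) =
      (z ^ a * lerchPhi z s (v + a) - z ^ (x + 1) * lerchPhi z s (v + x + 1)) / C := by
  set f : ℕ → ℝ := fun k => z ^ k / (v + (k : ℝ)) ^ s with hf
  -- summability of the shifted sequence
  have hsum : Summable (fun n : ℕ => f (n + a)) := by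
    have h0 := (lerch_summable_aux z s (v + a) hz0 hz1 hva).mul_left (z ^ a)
    refine h0.congr fun n => ?_
    simp only [hf]
    rw [pow_add]
    push_cast
    ring_nf
  -- tail sum identities
  have tail_eq : ∀ m : ℕ,
      z ^ m * lerchPhi z s (v + m) = ∑' n : ℕ, f (n + m) := by
    intro m
    rw [lerchPhi, ← tsum_mul_left]
    refine tsum_congr fun n => ?_
    simp only [hf]
    rw [pow_add]
    push_cast
    ring_nf
  -- finite sum identity
  set m : ℕ := x + 1 - a with hm
  have key : ∑ k ∈ Finset.Icc a x, f k =
      (∑' n : ℕ, f (n + a)) - (∑' n : ℕ, f (n + (x + 1))) := by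
    have hsum' : Summable (fun n : ℕ => f (n + m + a)) :=
      (summable_nat_add_iff m).2 hsum
    have h1 := Summable.sum_add_tsum_nat_add' (f := fun n : ℕ => f (n + a)) (k := m) hsum'
    have h2 : (∑' n : ℕ, f (n + m + a)) = ∑' n : ℕ, f (n + (x + 1)) := by
      refine tsum_congr fun n => ?_
      congr 1
      omega
    have h3 : ∑ i ∈ Finset.range m, f (i + a) = ∑ k ∈ Finset.Icc a x, f k := by
      rw [← Finset.Ico_add_one_right_eq_Icc, Finset.sum_Ico_eq_sum_range]
      exact Finset.sum_congr rfl fun i _ => by rw [add_comm]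
    rw [← h3, ← h2]
    linarith [h1]
  have ha' : z ^ a * lerchPhi z s (v + a) = ∑' n : ℕ, f (n + a) := tail_eq a
  have hx' : z ^ (x + 1) * lerchPhi z s (v + x + 1) = ∑' n : ℕ, f (n + (x + 1)) := by
    have h := tail_eq (x + 1)
    rw [← h]
    push_cast
    ring_nf
  calc ∑ k ∈ Finset.Icc a x, (1 / C) * (z ^ k / (v + (k : ℝ)) ^ s)
      = (1 / C) * ∑ k ∈ Finset.Icc a x, f k := by rw [Finset.mul_sum]
    _ = (1 / C) * ((∑' n : ℕ, f (n + a)) - ∑' n : ℕ, f (n + (x + 1))) := by rw [key]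
    _ = (z ^ a * lerchPhi z s (v + a) - z ^ (x + 1) * lerchPhi z s (v + x + 1)) / C := by
        rw [← ha', ← hx', one_div_mul_eq_div]
end

section
/- Let z, s, v be real with 0 < z < 1, let a ≤ b be natural numbers with v + a > 0, and let C = z^a Φ(z,s,v+a) − z^{b+1} Φ(z,s,v+b+1). Then for every natural number x with a ≤ x ≤ b, the hazard function of the doubly truncated Lerch distribution satisfies p_x / S(x) = (z^x/(v+x)^s) / (z^x Φ(z,s,v+x) − z^{b+1} Φ(z,s,v+b+1)), where p_x = (1/C) · z^x/(v+x)^s and S(x) = Σ_{k=x}^{b} p_k. -/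
lemma lerch_summable (z s w : ℝ) (hz0 : 0 < z) (hz1 : z < 1) (hw : 0 < w) :
    Summable (fun n : ℕ => z ^ n / ((n : ℝ) + w) ^ s) := by
  have hpos : ∀ n : ℕ, 0 < z ^ n / ((n : ℝ) + w) ^ s := by
    intro n
    have h1 : (0:ℝ) < (n : ℝ) + w := by positivity
    positivity
  apply summable_of_ratio_test_tendsto_lt_one hz1
  · filter_upwards with n using (hpos n).ne'
  · have h1 : Filter.Tendsto (fun n : ℕ => ((n:ℝ) + w) / ((n:ℝ) + 1 + w)) Filter.atTop (nhds 1) := by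
      have ht : Filter.Tendsto (fun n : ℕ => ((n:ℝ) + 1 + w)) Filter.atTop Filter.atTop := by
        apply Filter.tendsto_atTop_add_const_right
        apply Filter.tendsto_atTop_add_const_right
        exact tendsto_natCast_atTop_atTop
      have hinv : Filter.Tendsto (fun n : ℕ => (((n:ℝ) + 1 + w))⁻¹) Filter.atTop (nhds 0) :=
        Filter.Tendsto.comp tendsto_inv_atTop_zero ht
      have := (tendsto_const_nhds (x := (1:ℝ)) (f := Filter.atTop (α := ℕ))).sub hinv
      rw [sub_zero] at this
      apply this.congr'
      filter_upwards with n
      have hd : (0:ℝ) < (n:ℝ) + 1 + w := by positivity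
      field_simp
      ring
    have h2 := (h1.rpow_const (p := s) (Or.inl one_ne_zero)).const_mul z
    rw [Real.one_rpow, mul_one] at h2
    apply h2.congr'
    filter_upwards with n
    have hn : (0:ℝ) < (n : ℝ) + w := by positivity
    have hn1 : (0:ℝ) < ((n:ℕ)+1 : ℕ) + w := by push_cast; positivity
    rw [Real.div_rpow hn.le (by positivity : (0:ℝ) ≤ (n:ℝ) + 1 + w)]
    rw [Real.norm_eq_abs, Real.norm_eq_abs, abs_of_pos (hpos (n+1)), abs_of_pos (hpos n)]
    have hns : (0:ℝ) < ((n : ℝ) + w) ^ s := Real.rpow_pos_of_pos hn s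
    have hn1s : (0:ℝ) < ((n : ℝ) + 1 + w) ^ s := Real.rpow_pos_of_pos (by positivity) s
    push_cast
    rw [pow_succ]
    field_simp

lemma lerch_tail (z s v : ℝ) (hz0 : 0 < z) (hz1 : z < 1) (b x : ℕ)
    (hvx : 0 < v + x) (hxb : x ≤ b) :
    z ^ x * lerchPhi z s (v + x) - z ^ (b + 1) * lerchPhi z s (v + b + 1) =
      ∑ k ∈ Finset.Icc x b, z ^ k / (v + (k : ℝ)) ^ s := by
  set f : ℕ → ℝ := fun n => z ^ (x + n) / (v + ((x + n : ℕ) : ℝ)) ^ s with hf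
  have hsum : Summable f := by
    have h := (lerch_summable z s (v + x) hz0 hz1 hvx).mul_left (z ^ x)
    apply h.congr
    intro n
    simp only [hf]
    rw [← mul_div_assoc, ← pow_add]
    congr 2
    push_cast
    ring
  have hx1 : z ^ x * lerchPhi z s (v + x) = ∑' n, f n := by
    rw [lerchPhi, ← tsum_mul_left]
    congr 1; funext n
    simp only [hf]
    rw [← mul_div_assoc, ← pow_add]
    congr 2
    push_cast
    ring
  have hx2 : z ^ (b + 1) * lerchPhi z s (v + b + 1) = ∑' n, f (n + (b + 1 - x)) := by
    rw [lerchPhi, ← tsum_mul_left]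
    congr 1; funext n
    simp only [hf]
    rw [← mul_div_assoc, ← pow_add]
    have hxle : x ≤ b + 1 := hxb.trans (Nat.le_succ b)
    have : x + (n + (b + 1 - x)) = n + (b + 1) := by omega
    rw [this]
    congr 2 <;> push_cast <;> try ring
  have key := Summable.sum_add_tsum_nat_add (f := f) (b + 1 - x) hsum
  rw [hx1, hx2, ← key]
  have : ∑ k ∈ Finset.Icc x b, z ^ k / (v + (k : ℝ)) ^ s =
      ∑ i ∈ Finset.range (b + 1 - x), f i := by
    rw [← Finset.Ico_add_one_right_eq_Icc, Finset.sum_Ico_eq_sum_range]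
  rw [this]
  ring

/-- Hazard function of the doubly truncated Lerch distribution. -/
theorem doublyTruncated_hazard (z s v : ℝ) (hz0 : 0 < z) (hz1 : z < 1)
    (a b : ℕ) (hab : a ≤ b) (hva : v + a > 0) (C : ℝ)
    (hC : C = z ^ a * lerchPhi z s (v + a) - z ^ (b + 1) * lerchPhi z s (v + b + 1))
    (x : ℕ) (hax : a ≤ x) (hxb : x ≤ b) :
    ((1 / C) * (z ^ x / (v + (x : ℝ)) ^ s)) /
        (∑ k ∈ Finset.Icc x b, (1 / C) * (z ^ k / (v + (k : ℝ)) ^ s)) =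
      (z ^ x / (v + (x : ℝ)) ^ s) /
        (z ^ x * lerchPhi z s (v + x) - z ^ (b + 1) * lerchPhi z s (v + b + 1)) := by
  have hpos : ∀ k : ℕ, a ≤ k → 0 < z ^ k / (v + (k : ℝ)) ^ s := by
    intro k hk
    have h1 : (0:ℝ) < v + k := by
      have : (a : ℝ) ≤ k := Nat.cast_le.mpr hk
      linarith
    positivity
  have hCpos : 0 < C := by
    rw [hC, lerch_tail z s v hz0 hz1 b a hva hab]
    apply Finset.sum_pos
    · intro k hk
      exact hpos k (Finset.mem_Icc.mp hk).1
    · exact ⟨a, Finset.mem_Icc.mpr ⟨le_refl a, hab⟩⟩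
  have hvx : (0:ℝ) < v + x := by
    have : (a : ℝ) ≤ x := Nat.cast_le.mpr hax
    linarith
  rw [lerch_tail z s v hz0 hz1 b x hvx hxb, ← Finset.mul_sum,
    mul_div_mul_left _ _ (by positivity : (1:ℝ)/C ≠ 0)]
end

section
/- Let z, s, v be real with 0 < z < 1, let a ≤ b be natural numbers with v + a > 0, and let r be a natural number. Then the rth uncorrected moment of the doubly truncated Lerch distribution satisfies Σ_{x=a}^{b} x^r · z^x/(v+x)^s = Σ_{j=0}^{r} C(r,j) · (−v)^{r−j} · (z^a Φ(z,s−j,v+a) − z^{b+1} Φ(z,s−j,v+b+1)), where C(r,j) is the binomial coefficient; dividing both sides by the normalization constant z^a Φ(z,s,v+a) − z^{b+1} Φ(z,s,v+b+1) gives μ'_r. -/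
open Real Finset

lemma summable_aux (z w t : ℝ) (hz0 : 0 < z) (hz1 : z < 1) (hw : 0 < w) :
    Summable (fun n : ℕ => z ^ n * ((n : ℝ) + w) ^ t) := by
  obtain ⟨k, hk⟩ := exists_nat_ge |t|
  have hsum : Summable (fun n : ℕ => ((n : ℝ)) ^ k * z ^ n) :=
    summable_pow_mul_geometric_of_norm_lt_one k (by rwa [Real.norm_eq_abs, abs_of_pos hz0])
  have hshift : Summable (fun n : ℕ => ((n : ℝ) + 1) ^ k * z ^ (n + 1)) := by
    have := (summable_nat_add_iff 1).2 hsum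
    simpa using this
  have hmain : Summable (fun n : ℕ => ((n : ℝ) + 1) ^ k * z ^ n) := by
    apply (hshift.mul_left z⁻¹).congr
    intro n
    field_simp [pow_succ]
    ring
  set C : ℝ := w ^ t + (1 + w) ^ k with hC
  apply ((hmain.mul_left C)).of_nonneg_of_le
  · intro n
    positivity
  · intro n
    have hnw : (0:ℝ) < (n : ℝ) + w := by positivity
    have hbound : ((n : ℝ) + w) ^ t ≤ w ^ t + ((1 + w) * ((n : ℝ) + 1)) ^ k := by
      rcases le_or_gt t 0 with ht | ht
      · have h1 : ((n : ℝ) + w) ^ t ≤ w ^ t :=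
          Real.rpow_le_rpow_of_nonpos hw (by linarith [Nat.cast_nonneg (α := ℝ) n]) ht
        have h2 : (0:ℝ) ≤ ((1 + w) * ((n : ℝ) + 1)) ^ k := by positivity
        linarith
      · have hb1 : (1:ℝ) ≤ (1 + w) * ((n : ℝ) + 1) := by nlinarith [Nat.cast_nonneg (α := ℝ) n]
        have h1 : ((n : ℝ) + w) ^ t ≤ ((1 + w) * ((n : ℝ) + 1)) ^ t := by
          apply Real.rpow_le_rpow hnw.le _ ht.le
          nlinarith [Nat.cast_nonneg (α := ℝ) n]
        have h2 : ((1 + w) * ((n : ℝ) + 1)) ^ t ≤ ((1 + w) * ((n : ℝ) + 1)) ^ (k:ℝ) :=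
          Real.rpow_le_rpow_of_exponent_le hb1 (le_trans (le_abs_self t) hk)
        rw [Real.rpow_natCast] at h2
        have h3 : (0:ℝ) ≤ w ^ t := (Real.rpow_pos_of_pos hw t).le
        linarith
    have hmulpow : ((1 + w) * ((n : ℝ) + 1)) ^ k = (1 + w) ^ k * ((n : ℝ) + 1) ^ k :=
      mul_pow _ _ _
    have hz : (0:ℝ) ≤ z ^ n := by positivity
    have hone : (1:ℝ) ≤ ((n : ℝ) + 1) ^ k := one_le_pow₀ (by linarith [Nat.cast_nonneg (α := ℝ) n])
    have hwtpos : (0:ℝ) ≤ w ^ t := (Real.rpow_pos_of_pos hw t).le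
    calc z ^ n * ((n : ℝ) + w) ^ t
        ≤ z ^ n * (w ^ t + (1 + w) ^ k * ((n : ℝ) + 1) ^ k) := by
          rw [← hmulpow]; exact mul_le_mul_of_nonneg_left hbound hz
      _ ≤ z ^ n * (C * ((n : ℝ) + 1) ^ k) := by
          apply mul_le_mul_of_nonneg_left _ hz
          rw [hC, add_mul]
          have : w ^ t ≤ w ^ t * ((n : ℝ) + 1) ^ k := le_mul_of_one_le_right hwtpos hone
          linarith
      _ = C * (((n : ℝ) + 1) ^ k * z ^ n) := by ring

lemma key (z s' v : ℝ) (hz0 : 0 < z) (hz1 : z < 1) (a b : ℕ) (hab : a ≤ b)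
    (hva : 0 < v + a) :
    z ^ a * lerchPhi z s' (v + a) - z ^ (b + 1) * lerchPhi z s' (v + b + 1) =
      ∑ x ∈ Finset.Icc a b, z ^ x / (v + (x : ℝ)) ^ s' := by
  set g : ℕ → ℝ := fun n => z ^ (n + a) / (v + ((n + a : ℕ) : ℝ)) ^ s' with hg
  have hgsum : Summable g := by
    apply ((summable_aux z (v + a) (-s') hz0 hz1 hva).mul_left (z ^ a)).congr
    intro n
    have hpos : (0:ℝ) < (n : ℝ) + (v + a) := by positivity
    rw [hg]
    simp only [Nat.cast_add]
    rw [Real.rpow_neg hpos.le, pow_add, div_eq_mul_inv]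
    ring_nf
  -- z^c * lerchPhi z s' (v+c) = ∑' n, z^(n+c)/(v+(n+c))^s'
  have hphi : ∀ c : ℕ, z ^ c * lerchPhi z s' (v + c) =
      ∑' n : ℕ, z ^ (n + c) / (v + ((n + c : ℕ) : ℝ)) ^ s' := by
    intro c
    rw [lerchPhi, ← tsum_mul_left]
    congr 1; funext n
    rw [pow_add, Nat.cast_add]
    ring_nf
  have h1 : z ^ a * lerchPhi z s' (v + a) = ∑' n, g n := hphi a
  have h2 : z ^ (b + 1) * lerchPhi z s' (v + b + 1) = ∑' n, g (n + (b + 1 - a)) := by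
    have : v + (b + 1 : ℕ) = v + b + 1 := by push_cast; ring
    rw [← this, hphi (b + 1)]
    congr 1; funext n
    have hn : n + (b + 1 - a) + a = n + (b + 1) := by omega
    rw [hg]; simp only [hn]
  have htel := Summable.sum_add_tsum_nat_add (b + 1 - a) hgsum
  rw [h1, h2, ← htel]
  have : ∑ x ∈ Finset.Icc a b, z ^ x / (v + (x : ℝ)) ^ s' =
      ∑ i ∈ Finset.range (b + 1 - a), g i := by
    rw [← Finset.Ico_add_one_right_eq_Icc, Finset.sum_Ico_eq_sum_range]
    apply Finset.sum_congr rfl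
    intro i _
    have hn : a + i + 0 = i + a := by omega
    rw [hg]; simp only [← hn]; norm_num
  rw [this]; ring

/-- Unnormalized rth uncorrected moment of the doubly truncated Lerch distribution. -/
theorem doublyTruncated_uncorrected_moment (z s v : ℝ) (hz0 : 0 < z) (hz1 : z < 1)
    (a b : ℕ) (hab : a ≤ b) (hva : v + a > 0) (r : ℕ) :
    ∑ x ∈ Finset.Icc a b, (x : ℝ) ^ r * (z ^ x / (v + (x : ℝ)) ^ s) =
      ∑ j ∈ Finset.range (r + 1), (r.choose j : ℝ) * (-v) ^ (r - j) *
        (z ^ a * lerchPhi z (s - j) (v + a) - z ^ (b + 1) * lerchPhi z (s - j) (v + b + 1)) := by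
  have hrw : ∀ j ∈ Finset.range (r + 1),
      (r.choose j : ℝ) * (-v) ^ (r - j) *
        (z ^ a * lerchPhi z (s - j) (v + a) - z ^ (b + 1) * lerchPhi z (s - j) (v + b + 1)) =
      ∑ x ∈ Finset.Icc a b,
        (r.choose j : ℝ) * (-v) ^ (r - j) * (z ^ x / (v + (x : ℝ)) ^ (s - (j : ℝ))) := by
    intro j _
    rw [key z (s - j) v hz0 hz1 a b hab hva, Finset.mul_sum]
  rw [Finset.sum_congr rfl hrw, Finset.sum_comm]
  apply Finset.sum_congr rfl
  intro x hx
  have hax : a ≤ x := (Finset.mem_Icc.mp hx).1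
  have hpos : (0:ℝ) < v + x := by
    have : (a : ℝ) ≤ x := by exact_mod_cast hax
    linarith
  have hterm : ∀ j : ℕ, z ^ x / (v + (x : ℝ)) ^ (s - (j : ℝ)) =
      (v + (x : ℝ)) ^ j * (z ^ x / (v + (x : ℝ)) ^ s) := by
    intro j
    rw [Real.rpow_sub hpos, Real.rpow_natCast]
    field_simp
  simp only [hterm]
  have hbinom := add_pow (v + (x : ℝ)) (-v) r
  have hxr : ((v + (x : ℝ)) + -v) ^ r = (x : ℝ) ^ r := by ring_nf
  rw [hxr] at hbinom
  symm
  calc ∑ j ∈ Finset.range (r + 1), (r.choose j : ℝ) * (-v) ^ (r - j) *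
        ((v + (x : ℝ)) ^ j * (z ^ x / (v + (x : ℝ)) ^ s))
      = (∑ j ∈ Finset.range (r + 1), (v + (x : ℝ)) ^ j * (-v) ^ (r - j) * (r.choose j : ℝ)) *
        (z ^ x / (v + (x : ℝ)) ^ s) := by
        rw [Finset.sum_mul]; apply Finset.sum_congr rfl; intro j _; ring
    _ = (x : ℝ) ^ r * (z ^ x / (v + (x : ℝ)) ^ s) := by rw [← hbinom]
end

section
/- Let z, s, v be real with 0 < z < 1, let a ≤ b be natural numbers with v + a > 0, let C = z^a Φ(z,s,v+a) − z^{b+1} Φ(z,s,v+b+1), let μ = Σ_{x=a}^{b} x · (1/C) · z^x/(v+x)^s be the mean, and let r be a natural number. Then the rth central moment satisfies Σ_{x=a}^{b} (x − μ)^r · (1/C) · z^x/(v+x)^s = (1/C) · Σ_{j=0}^{r} (−1)^{r−j} C(r,j) · (z^a Φ(z,s−j,v+a) − z^{b+1} Φ(z,s−j,v+b+1)) · ((z^a Φ(z,s−1,v+a) − z^{b+1} Φ(z,s−1,v+b+1))/(z^a Φ(z,s,v+a) − z^{b+1} Φ(z,s,v+b+1)))^{r−j}. -/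
open Filter Finset Real Topology

lemma summable_lerch_aux {z : ℝ} (hz0 : 0 < z) (hz1 : z < 1) (t w : ℝ) (hw : 0 < w) :
    Summable (fun n : ℕ => z ^ n / ((n : ℝ) + w) ^ t) := by
  have hpos : ∀ n : ℕ, 0 < z ^ n / ((n : ℝ) + w) ^ t := by
    intro n
    have h1 : (0:ℝ) < (n : ℝ) + w := by positivity
    exact div_pos (pow_pos hz0 n) (Real.rpow_pos_of_pos h1 t)
  apply summable_of_ratio_test_tendsto_lt_one hz1
  · filter_upwards with n using (hpos n).ne'
  · have h2 : Tendsto (fun n : ℕ => ((n : ℝ) + 1 + w)) atTop atTop := by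
      have := tendsto_natCast_atTop_atTop (R := ℝ)
      exact (tendsto_atTop_add_const_right _ (1 + w) this).congr (fun n => by ring)
    have h3 : Tendsto (fun n : ℕ => ((n : ℝ) + 1 + w)⁻¹) atTop (𝓝 0) :=
      h2.inv_tendsto_atTop
    have h1 : Tendsto (fun n : ℕ => ((n : ℝ) + w) / ((n : ℝ) + 1 + w)) atTop (𝓝 1) := by
      have h4 : Tendsto (fun n : ℕ => 1 - ((n : ℝ) + 1 + w)⁻¹) atTop (𝓝 1) := by
        simpa using tendsto_const_nhds.sub h3
      refine h4.congr' ?_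
      filter_upwards with n
      have hne : ((n : ℝ) + 1 + w) ≠ 0 := by positivity
      field_simp
      ring
    have h5 : Tendsto (fun n : ℕ => z * (((n : ℝ) + w) / ((n : ℝ) + 1 + w)) ^ t) atTop
        (𝓝 (z * (1:ℝ) ^ t)) :=
      (h1.rpow_const (Or.inl one_ne_zero)).const_mul z
    rw [Real.one_rpow, mul_one] at h5
    refine h5.congr fun n => ?_
    have hn1 : (0:ℝ) < (n : ℝ) + w := by positivity
    have hn2 : (0:ℝ) < (n : ℝ) + 1 + w := by positivity
    rw [Real.norm_eq_abs, Real.norm_eq_abs, abs_of_pos (hpos (n+1)), abs_of_pos (hpos n)]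
    rw [Real.div_rpow hn1.le hn2.le]
    have e1 : ((↑(n+1) : ℝ) + w) = (n : ℝ) + 1 + w := by push_cast; ring
    rw [e1, pow_succ]
    have hd1 : ((n:ℝ) + w) ^ t ≠ 0 := (Real.rpow_pos_of_pos hn1 t).ne'
    have hd2 : ((n:ℝ) + 1 + w) ^ t ≠ 0 := (Real.rpow_pos_of_pos hn2 t).ne'
    field_simp

lemma tail_diff {z : ℝ} (hz0 : 0 < z) (hz1 : z < 1) (t v : ℝ) (a b : ℕ) (hab : a ≤ b)
    (hva : 0 < v + a) :
    z ^ a * lerchPhi z t (v + a) - z ^ (b + 1) * lerchPhi z t (v + b + 1) =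
      ∑ x ∈ Finset.Icc a b, z ^ x / (v + (x : ℝ)) ^ t := by
  set g : ℕ → ℝ := fun n => z ^ (a + n) / (v + ((a + n : ℕ) : ℝ)) ^ t with hg
  have key : ∀ n : ℕ, z ^ a * (z ^ n / ((n : ℝ) + (v + a)) ^ t) = g n := by
    intro n
    simp only [hg]
    rw [pow_add, mul_div_assoc]
    congr 2
    push_cast; ring
  have hgsum : Summable g :=
    ((summable_lerch_aux hz0 hz1 t (v + a) hva).mul_left (z ^ a)).congr key
  have h1 : z ^ a * lerchPhi z t (v + a) = ∑' n, g n := by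
    rw [lerchPhi, ← tsum_mul_left]
    exact tsum_congr key
  have hvb : (0:ℝ) < v + (b + 1 : ℕ) := by
    have : (a : ℝ) ≤ ((b + 1 : ℕ) : ℝ) := by exact_mod_cast Nat.le_succ_of_le hab
    linarith
  have key2 : ∀ n : ℕ, z ^ (b + 1) * (z ^ n / ((n : ℝ) + (v + b + 1)) ^ t)
      = g (n + (b + 1 - a)) := by
    intro n
    simp only [hg]
    have e1 : a + (n + (b + 1 - a)) = n + (b + 1) := by omega
    rw [e1, pow_add z n (b + 1), mul_comm (z ^ n), mul_div_assoc]
    congr 2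
    push_cast; ring
  have h2 : z ^ (b + 1) * lerchPhi z t (v + b + 1) = ∑' n, g (n + (b + 1 - a)) := by
    rw [lerchPhi, ← tsum_mul_left]
    exact tsum_congr key2
  rw [h1, h2]
  have h3 := Summable.sum_add_tsum_nat_add (b + 1 - a) hgsum
  have h4 : ∑' n, g n - ∑' n, g (n + (b + 1 - a)) = ∑ i ∈ Finset.range (b + 1 - a), g i := by
    linarith [h3]
  rw [h4, ← Finset.Ico_add_one_right_eq_Icc, Finset.sum_Ico_eq_sum_range]

/-- rth central moment of the doubly truncated Lerch distribution. -/
theorem doublyTruncated_central_moment (z s v : ℝ) (hz0 : 0 < z) (hz1 : z < 1)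
    (a b : ℕ) (hab : a ≤ b) (hva : v + a > 0) (C : ℝ)
    (hC : C = z ^ a * lerchPhi z s (v + a) - z ^ (b + 1) * lerchPhi z s (v + b + 1))
    (μ : ℝ)
    (hμ : μ = ∑ x ∈ Finset.Icc a b, (x : ℝ) * ((1 / C) * (z ^ x / (v + (x : ℝ)) ^ s)))
    (r : ℕ) :
    ∑ x ∈ Finset.Icc a b, ((x : ℝ) - μ) ^ r * ((1 / C) * (z ^ x / (v + (x : ℝ)) ^ s)) =
      (1 / C) * ∑ j ∈ Finset.range (r + 1), (-1 : ℝ) ^ (r - j) * (r.choose j : ℝ) *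
        (z ^ a * lerchPhi z (s - j) (v + a) - z ^ (b + 1) * lerchPhi z (s - j) (v + b + 1)) *
        ((z ^ a * lerchPhi z (s - 1) (v + a) - z ^ (b + 1) * lerchPhi z (s - 1) (v + b + 1)) /
            (z ^ a * lerchPhi z s (v + a) - z ^ (b + 1) * lerchPhi z s (v + b + 1))) ^ (r - j) := by
  have hSt : ∀ t : ℝ, z ^ a * lerchPhi z t (v + a) - z ^ (b + 1) * lerchPhi z t (v + b + 1) =
      ∑ x ∈ Finset.Icc a b, z ^ x / (v + (x : ℝ)) ^ t := fun t => tail_diff hz0 hz1 t v a b hab hva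
  have hxpos : ∀ x ∈ Finset.Icc a b, (0:ℝ) < v + x := by
    intro x hx
    have h1 : (a : ℝ) ≤ x := by exact_mod_cast (Finset.mem_Icc.mp hx).1
    linarith
  have hfpos : ∀ x ∈ Finset.Icc a b, 0 < z ^ x / (v + (x:ℝ)) ^ s := fun x hx =>
    div_pos (pow_pos hz0 x) (Real.rpow_pos_of_pos (hxpos x hx) s)
  have hCeq : C = ∑ x ∈ Finset.Icc a b, z ^ x / (v + (x : ℝ)) ^ s := by rw [hC, hSt]
  have hCpos : 0 < C := by
    rw [hCeq]; exact Finset.sum_pos hfpos (Finset.nonempty_Icc.mpr hab)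
  -- the moment sums with weight (v+x)^j
  have hSj : ∀ j : ℕ, (∑ x ∈ Finset.Icc a b, z ^ x / (v + (x:ℝ)) ^ (s - (j:ℝ))) =
      ∑ x ∈ Finset.Icc a b, (v + (x:ℝ)) ^ j * (z ^ x / (v + (x:ℝ)) ^ s) := by
    intro j
    refine Finset.sum_congr rfl fun x hx => ?_
    have hx0 := hxpos x hx
    rw [Real.rpow_sub hx0, Real.rpow_natCast]
    rw [div_div_eq_mul_div]
    ring
  have hS1 : (∑ x ∈ Finset.Icc a b, z ^ x / (v + (x:ℝ)) ^ (s - 1)) =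
      ∑ x ∈ Finset.Icc a b, (v + (x:ℝ)) * (z ^ x / (v + (x:ℝ)) ^ s) := by
    have := hSj 1
    simpa using this
  -- the ratio equals v + μ
  have hmu : (∑ x ∈ Finset.Icc a b, (v + (x:ℝ)) * (z ^ x / (v + (x:ℝ)) ^ s)) / C = v + μ := by
    rw [hμ]
    rw [div_eq_iff hCpos.ne']
    rw [add_mul, Finset.sum_mul]
    have e1 : ∀ x ∈ Finset.Icc a b, (v + (x:ℝ)) * (z ^ x / (v + (x:ℝ)) ^ s)
        = v * (z ^ x / (v + (x:ℝ)) ^ s) + (x:ℝ) * (1 / C * (z ^ x / (v + (x:ℝ)) ^ s)) * C := by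
      intro x hx
      have h1 : (1:ℝ)/C * C = 1 := one_div_mul_cancel hCpos.ne'
      have h2 : (x:ℝ) * (1 / C * (z ^ x / (v + (x:ℝ)) ^ s)) * C
          = (x:ℝ) * (z ^ x / (v + (x:ℝ)) ^ s) * (1/C*C) := by ring
      rw [h2, h1]
      ring
    rw [Finset.sum_congr rfl e1, Finset.sum_add_distrib, ← Finset.mul_sum, ← hCeq]
  set R : ℝ := v + μ with hR
  calc ∑ x ∈ Finset.Icc a b, ((x : ℝ) - μ) ^ r * ((1 / C) * (z ^ x / (v + (x : ℝ)) ^ s))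
      = ∑ x ∈ Finset.Icc a b, ∑ j ∈ Finset.range (r + 1),
          (v + (x:ℝ)) ^ j * (-R) ^ (r - j) * (r.choose j : ℝ) *
            ((1 / C) * (z ^ x / (v + (x : ℝ)) ^ s)) := by
        refine Finset.sum_congr rfl fun x hx => ?_
        rw [show (x:ℝ) - μ = (v + (x:ℝ)) + (-R) by rw [hR]; ring, add_pow, Finset.sum_mul]
    _ = ∑ j ∈ Finset.range (r + 1), ∑ x ∈ Finset.Icc a b,
          (v + (x:ℝ)) ^ j * (-R) ^ (r - j) * (r.choose j : ℝ) *
            ((1 / C) * (z ^ x / (v + (x : ℝ)) ^ s)) := Finset.sum_comm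
    _ = (1 / C) * ∑ j ∈ Finset.range (r + 1), (-1 : ℝ) ^ (r - j) * (r.choose j : ℝ) *
        (z ^ a * lerchPhi z (s - j) (v + a) - z ^ (b + 1) * lerchPhi z (s - j) (v + b + 1)) *
        ((z ^ a * lerchPhi z (s - 1) (v + a) - z ^ (b + 1) * lerchPhi z (s - 1) (v + b + 1)) /
            (z ^ a * lerchPhi z s (v + a) - z ^ (b + 1) * lerchPhi z s (v + b + 1))) ^ (r - j) := by
        rw [Finset.mul_sum]
        refine Finset.sum_congr rfl fun j hj => ?_
        rw [hSt (s - (j:ℝ)), hSj j, hSt (s - 1), hS1, ← hC, hmu]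
        rw [show ∑ x ∈ Finset.Icc a b,
            (v + (x:ℝ)) ^ j * (-R) ^ (r - j) * (r.choose j : ℝ) *
              ((1 / C) * (z ^ x / (v + (x : ℝ)) ^ s))
          = ((-R) ^ (r - j) * (r.choose j : ℝ) * (1 / C)) *
              ∑ x ∈ Finset.Icc a b, (v + (x:ℝ)) ^ j * (z ^ x / (v + (x : ℝ)) ^ s) by
            rw [Finset.mul_sum]; exact Finset.sum_congr rfl fun x _ => by ring]
        rw [neg_pow]
        ring
end

section
/- Let z, s, v be real with 0 < z < 1 and v > 0, let μ = Σ_{x=1}^{∞} x · z^x/((v+x)^s · z Φ(z,s,v+1)) be the mean of the zero-truncated Lerch distribution, and let r be a natural number. Then the rth central moment satisfies Σ_{x=1}^{∞} (x − μ)^r · z^x/((v+x)^s · z Φ(z,s,v+1)) = (1/Φ(z,s,v+1)) · Σ_{j=0}^{r} (−1)^{r−j} C(r,j) · Φ(z,s−j,v+1) · (Φ(z,s−1,v+1)/Φ(z,s,v+1))^{r−j} (this corrects Equation (3.1) of Zörnig and Altmann (1995), where the running index j incorrectly starts from 1 and Φ is not the correct Lerch transcendent). -/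
lemma summable_geom_rpow (z : ℝ) (hz0 : 0 < z) (hz1 : z < 1) (w a : ℝ) (hw : 1 ≤ w) :
    Summable (fun n : ℕ => z ^ n * ((n : ℝ) + w) ^ a) := by
  set k := ⌈a⌉₊ with hk
  have h0 : Summable (fun n : ℕ => ((n : ℝ)) ^ k * z ^ n) :=
    summable_pow_mul_geometric_of_norm_lt_one k
      (by rw [Real.norm_eq_abs, abs_of_pos hz0]; exact hz1)
  have h1 : Summable (fun n : ℕ => (((n+1 : ℕ)) : ℝ) ^ k * z ^ (n+1)) :=
    (summable_nat_add_iff (f := fun n : ℕ => ((n : ℝ)) ^ k * z ^ n) 1).2 h0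
  have hsum : Summable (fun n : ℕ => (w ^ k / z) * ((((n+1 : ℕ)) : ℝ) ^ k * z ^ (n+1))) :=
    h1.mul_left _
  apply Summable.of_nonneg_of_le _ _ hsum
  · intro n; positivity
  · intro n
    have hb : (1:ℝ) ≤ (n : ℝ) + w := by
      have : (0:ℝ) ≤ n := Nat.cast_nonneg n
      linarith
    have h1 : ((n : ℝ) + w) ^ a ≤ ((n : ℝ) + w) ^ (k : ℝ) :=
      Real.rpow_le_rpow_of_exponent_le hb (Nat.le_ceil a)
    have h2 : ((n : ℝ) + w) ^ (k:ℝ) = ((n : ℝ) + w) ^ k := Real.rpow_natCast _ k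
    have h3 : ((n : ℝ) + w) ^ k ≤ (((n:ℝ) + 1) * w) ^ k := by
      apply pow_le_pow_left₀ (by linarith)
      nlinarith [Nat.cast_nonneg (α := ℝ) n]
    have h4 : z ^ n * ((n : ℝ) + w) ^ a ≤ z ^ n * (((n:ℝ)+1) * w) ^ k :=
      mul_le_mul_of_nonneg_left (h1.trans (h2.le.trans h3)) (by positivity)
    refine h4.trans (le_of_eq ?_)
    push_cast
    rw [mul_pow]
    field_simp
    ring

lemma summable_lerch (z : ℝ) (hz0 : 0 < z) (hz1 : z < 1) (w t : ℝ) (hw : 1 ≤ w) :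
    Summable (fun n : ℕ => z ^ n / ((n : ℝ) + w) ^ t) := by
  have := summable_geom_rpow z hz0 hz1 w (-t) hw
  refine this.congr fun n => ?_
  have hp : (0:ℝ) < (n:ℝ) + w := by
    have : (0:ℝ) ≤ n := Nat.cast_nonneg n
    linarith
  rw [Real.rpow_neg hp.le, div_eq_mul_inv]

lemma lerch_pos (z : ℝ) (hz0 : 0 < z) (hz1 : z < 1) (w t : ℝ) (hw : 1 ≤ w) :
    0 < lerchPhi z t w := by
  refine Summable.tsum_pos (summable_lerch z hz0 hz1 w t hw) (fun n => ?_) 0 ?_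
  · have hp : (0:ℝ) < (n:ℝ) + w := by
      have : (0:ℝ) ≤ n := Nat.cast_nonneg n
      linarith
    positivity
  · have hp : (0:ℝ) < (0:ℕ) + w := by norm_num; linarith
    positivity

/-- rth central moment of the zero-truncated Lerch distribution. -/
theorem zeroTruncated_central_moment (z s v : ℝ) (hz0 : 0 < z) (hz1 : z < 1)
    (hv : 0 < v) (μ : ℝ)
    (hμ : μ = ∑' x : ℕ, ((x : ℝ) + 1) *
        (z ^ (x + 1) / ((v + ((x : ℝ) + 1)) ^ s * (z * lerchPhi z s (v + 1)))))
    (r : ℕ) :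
    ∑' x : ℕ, (((x : ℝ) + 1) - μ) ^ r *
        (z ^ (x + 1) / ((v + ((x : ℝ) + 1)) ^ s * (z * lerchPhi z s (v + 1)))) =
      (1 / lerchPhi z s (v + 1)) *
        ∑ j ∈ Finset.range (r + 1), (-1 : ℝ) ^ (r - j) * (r.choose j : ℝ) *
          lerchPhi z (s - j) (v + 1) *
          (lerchPhi z (s - 1) (v + 1) / lerchPhi z s (v + 1)) ^ (r - j) := by
  set w := v + 1 with hwdef
  have hw : 1 ≤ w := by linarith
  have hΦ : 0 < lerchPhi z s w := lerch_pos z hz0 hz1 w s hw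
  set Φ := lerchPhi z s w with hΦdef
  set P : ℕ → ℝ := fun x => z ^ x / ((x : ℝ) + w) ^ s with hP
  have hxw : ∀ x : ℕ, (0:ℝ) < (x:ℝ) + w := by
    intro x
    have : (0:ℝ) ≤ x := Nat.cast_nonneg x
    linarith
  -- rewrite the pmf summand
  have hpmf : ∀ x : ℕ, z ^ (x + 1) / ((v + ((x : ℝ) + 1)) ^ s * (z * Φ)) = P x / Φ := by
    intro x
    have h1 : v + ((x:ℝ) + 1) = (x:ℝ) + w := by rw [hwdef]; ring
    rw [h1, pow_succ, hP]
    have h2 : ((x:ℝ) + w) ^ s ≠ 0 := (Real.rpow_pos_of_pos (hxw x) s).ne'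
    field_simp
  -- g j : the j-weighted terms
  have hg : ∀ j : ℕ, ∀ x : ℕ, ((x:ℝ) + w) ^ j * P x = z ^ x / ((x : ℝ) + w) ^ (s - (j:ℝ)) := by
    intro j x
    rw [Real.rpow_sub (hxw x), Real.rpow_natCast, hP]
    have h2 : ((x:ℝ) + w) ^ s ≠ 0 := (Real.rpow_pos_of_pos (hxw x) s).ne'
    have h3 : ((x:ℝ) + w) ^ j ≠ 0 := pow_ne_zero j (hxw x).ne'
    field_simp
  have hgs : ∀ j : ℕ, Summable (fun x : ℕ => ((x:ℝ) + w) ^ j * P x) := by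
    intro j
    exact (summable_lerch z hz0 hz1 w (s - (j:ℝ)) hw).congr fun x => (hg j x).symm
  have hgt : ∀ j : ℕ, ∑' x : ℕ, ((x:ℝ) + w) ^ j * P x = lerchPhi z (s - (j:ℝ)) w := by
    intro j
    rw [lerchPhi]
    exact tsum_congr (hg j)
  have hPs : Summable P := summable_lerch z hz0 hz1 w s hw
  have hPt : ∑' x, P x = Φ := rfl
  -- the mean
  set M : ℝ := lerchPhi z (s - 1) w / Φ with hM
  have hμM : μ = M - v := by
    rw [hμ]
    have h1 : ∀ x : ℕ, ((x : ℝ) + 1) *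
        (z ^ (x + 1) / ((v + ((x : ℝ) + 1)) ^ s * (z * Φ))) =
        (1/Φ) * (((x:ℝ) + w) ^ 1 * P x) - (v/Φ) * P x := by
      intro x
      rw [hpmf x, hwdef]
      ring
    rw [tsum_congr h1, Summable.tsum_sub (((hgs 1).mul_left _)) ((hPs.mul_left _)),
      tsum_mul_left, tsum_mul_left, hgt 1, hPt, hM]
    push_cast
    field_simp
  -- expand central moment
  have key : ∀ x : ℕ, (((x : ℝ) + 1) - μ) ^ r *
      (z ^ (x + 1) / ((v + ((x : ℝ) + 1)) ^ s * (z * Φ))) =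
      ∑ j ∈ Finset.range (r + 1),
        ((-1:ℝ) ^ (j + r) * M ^ (r - j) * (r.choose j : ℝ) / Φ) * (((x:ℝ) + w) ^ j * P x) := by
    intro x
    rw [hpmf x]
    have h1 : ((x : ℝ) + 1) - μ = ((x:ℝ) + w) - M := by rw [hμM, hwdef]; ring
    rw [h1, sub_pow, Finset.sum_mul]
    refine Finset.sum_congr rfl fun j _ => ?_
    ring
  rw [tsum_congr key, Summable.tsum_finsetSum (fun j _ => ((hgs j).mul_left _)), Finset.mul_sum]
  refine Finset.sum_congr rfl fun j hj => ?_
  have hjr : j ≤ r := Nat.lt_succ_iff.mp (Finset.mem_range.mp hj)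
  rw [tsum_mul_left, hgt j]
  have hsign : ((-1:ℝ)) ^ (j + r) = (-1) ^ (r - j) := by
    have h : j + r = (r - j) + 2 * j := by omega
    rw [h, pow_add, pow_mul]
    norm_num
  rw [hsign, hM]
  ring
end

section
/- Let z, s be real with 0 < z < 1. Then for every real v > 0, the function v ↦ Φ(z,s,v) is differentiable at v and its derivative satisfies (∂Φ/∂v)(z,s,v) = −s · Φ(z,s+1,v). -/
set_option maxHeartbeats 1000000

open Real

/-- Summability of `z^n (n+c)^a` for `0 < z < 1`. -/
lemma lerch_aux_summable (z a c : ℝ) (hz0 : 0 < z) (hz1 : z < 1) (hc : 0 < c) :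
    Summable (fun n : ℕ => z ^ n * ((n : ℝ) + c) ^ a) := by
  rcases le_or_gt a 0 with ha | ha
  · apply Summable.of_nonneg_of_le (fun n => by positivity) (fun n => ?_)
      ((summable_geometric_of_lt_one hz0.le hz1).mul_right (c ^ a))
    have : ((n : ℝ) + c) ^ a ≤ c ^ a :=
      Real.rpow_le_rpow_of_nonpos hc (by linarith [Nat.cast_nonneg (α := ℝ) n]) ha
    exact mul_le_mul_of_nonneg_left this (by positivity)
  · set k := ⌈a⌉₊ with hk
    have hbase : Summable (fun n : ℕ => ((n : ℝ) + 1) ^ k * z ^ n) := by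
      have h1 : Summable (fun n : ℕ => (n : ℝ) ^ k * z ^ n) :=
        summable_pow_mul_geometric_of_norm_lt_one k (by rwa [Real.norm_eq_abs, abs_of_pos hz0])
      have h2 : Summable (fun n : ℕ => ((n + 1 : ℕ) : ℝ) ^ k * z ^ (n + 1)) :=
        (summable_nat_add_iff 1).2 h1
      have := h2.mul_left z⁻¹
      apply this.congr
      intro n
      push_cast
      rw [pow_succ, show z⁻¹ * (((n:ℝ) + 1) ^ k * (z ^ n * z)) = ((n:ℝ) + 1) ^ k * z ^ n * (z⁻¹ * z) by ring, inv_mul_cancel₀ hz0.ne', mul_one]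
    apply Summable.of_nonneg_of_le (fun n => by positivity) (fun n => ?_)
      (hbase.mul_right ((c + 1) ^ a))
    have h1 : ((n : ℝ) + c) ^ a ≤ (((n : ℝ) + 1) * (c + 1)) ^ a := by
      apply Real.rpow_le_rpow (by positivity) _ ha.le
      nlinarith [Nat.cast_nonneg (α := ℝ) n]
    have h2 : (((n : ℝ) + 1) * (c + 1)) ^ a = ((n : ℝ) + 1) ^ a * (c + 1) ^ a :=
      Real.mul_rpow (by positivity) (by positivity)
    have h3 : ((n : ℝ) + 1) ^ a ≤ ((n : ℝ) + 1) ^ k := by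
      rw [← Real.rpow_natCast (((n : ℝ) + 1)) k]
      exact Real.rpow_le_rpow_of_exponent_le (by linarith [Nat.cast_nonneg (α := ℝ) n])
        (Nat.le_ceil a)
    have h4 : ((n : ℝ) + c) ^ a ≤ ((n : ℝ) + 1) ^ k * (c + 1) ^ a := by
      calc ((n : ℝ) + c) ^ a ≤ ((n : ℝ) + 1) ^ a * (c + 1) ^ a := h2 ▸ h1
        _ ≤ ((n : ℝ) + 1) ^ k * (c + 1) ^ a :=
            mul_le_mul_of_nonneg_right h3 (by positivity)
    calc z ^ n * ((n : ℝ) + c) ^ a ≤ z ^ n * (((n : ℝ) + 1) ^ k * (c + 1) ^ a) :=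
          mul_le_mul_of_nonneg_left h4 (by positivity)
      _ = ((n : ℝ) + 1) ^ k * z ^ n * (c + 1) ^ a := by ring

/-- The pointwise derivative of each term. -/
lemma lerch_term_hasDerivAt (z s : ℝ) (n : ℕ) {x : ℝ} (hx : 0 < (n : ℝ) + x) :
    HasDerivAt (fun w : ℝ => z ^ n / ((n : ℝ) + w) ^ s)
      (-s * (z ^ n / ((n : ℝ) + x) ^ (s + 1))) x := by
  have h1 : HasDerivAt (fun w : ℝ => (n : ℝ) + w) 1 x := (hasDerivAt_id x).const_add _
  have h2 : HasDerivAt (fun w : ℝ => ((n : ℝ) + w) ^ s) (s * ((n : ℝ) + x) ^ (s - 1)) x := by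
    exact ((Real.hasDerivAt_rpow_const (p := s) (Or.inl hx.ne')).comp x h1).congr_deriv (mul_one _)
  have hne : ((n : ℝ) + x) ^ s ≠ 0 := (Real.rpow_pos_of_pos hx s).ne'
  have := (hasDerivAt_const x (z ^ n)).div h2 hne
  refine this.congr_deriv ?_
  symm
  rw [zero_mul, zero_sub, sq]
  have e : ((n : ℝ) + x) ^ s * ((n : ℝ) + x) ^ s
      = ((n : ℝ) + x) ^ (s - 1) * ((n : ℝ) + x) ^ (s + 1) := by
    rw [← Real.rpow_add hx, ← Real.rpow_add hx]; ring_nf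
  rw [← mul_div_assoc, div_eq_div_iff (Real.rpow_pos_of_pos hx (s + 1)).ne' (by positivity)]
  linear_combination (-(s) * z ^ n) * e

/-- ∂Φ/∂v (z,s,v) = −s Φ(z,s+1,v). -/
theorem lerchPhi_deriv_v (z s : ℝ) (hz0 : 0 < z) (hz1 : z < 1) (v : ℝ) (hv : 0 < v) :
    DifferentiableAt ℝ (fun w : ℝ => lerchPhi z s w) v ∧
      deriv (fun w : ℝ => lerchPhi z s w) v = -s * lerchPhi z (s + 1) v := by
  set t : Set ℝ := Set.Ioo (v / 2) (v + 1) with ht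
  have hvt : v ∈ t := ⟨by linarith, by linarith⟩
  set u : ℕ → ℝ := fun n => |s| * (z ^ n * ((n : ℝ) + v / 2) ^ (-(s + 1))
    + z ^ n * ((n : ℝ) + (v + 1)) ^ (-(s + 1))) with hu
  have husum : Summable u :=
    ((lerch_aux_summable z (-(s + 1)) (v / 2) hz0 hz1 (by linarith)).add
      (lerch_aux_summable z (-(s + 1)) (v + 1) hz0 hz1 (by linarith))).mul_left |s|
  have hpos : ∀ (n : ℕ) (y : ℝ), y ∈ t → 0 < (n : ℝ) + y := by
    intro n y hy
    have := hy.1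
    have := Nat.cast_nonneg (α := ℝ) n
    linarith
  have hderiv : ∀ (n : ℕ) (y : ℝ), y ∈ t →
      HasDerivAt (fun w : ℝ => z ^ n / ((n : ℝ) + w) ^ s)
        (-s * (z ^ n / ((n : ℝ) + y) ^ (s + 1))) y :=
    fun n y hy => lerch_term_hasDerivAt z s n (hpos n y hy)
  have hbound : ∀ (n : ℕ) (y : ℝ), y ∈ t →
      ‖-s * (z ^ n / ((n : ℝ) + y) ^ (s + 1))‖ ≤ u n := by
    intro n y hy
    have hny := hpos n y hy
    rw [norm_mul, Real.norm_eq_abs, Real.norm_eq_abs, abs_neg,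
      abs_of_pos (by positivity : (0:ℝ) < z ^ n / ((n : ℝ) + y) ^ (s + 1))]
    rw [div_eq_mul_inv, ← Real.rpow_neg hny.le]
    apply mul_le_mul_of_nonneg_left _ (abs_nonneg s)
    have key : ((n : ℝ) + y) ^ (-(s + 1)) ≤ ((n : ℝ) + v / 2) ^ (-(s + 1))
        + ((n : ℝ) + (v + 1)) ^ (-(s + 1)) := by
      rcases le_or_gt 0 (-(s + 1)) with he | he
      · have h1 : ((n : ℝ) + y) ^ (-(s + 1)) ≤ ((n : ℝ) + (v + 1)) ^ (-(s + 1)) :=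
          Real.rpow_le_rpow hny.le (by linarith [hy.2]) he
        have h2 : 0 ≤ ((n : ℝ) + v / 2) ^ (-(s + 1)) := by positivity
        linarith
      · have h1 : ((n : ℝ) + y) ^ (-(s + 1)) ≤ ((n : ℝ) + v / 2) ^ (-(s + 1)) :=
          Real.rpow_le_rpow_of_nonpos (by positivity) (by linarith [hy.1]) he.le
        have h2 : 0 ≤ ((n : ℝ) + (v + 1)) ^ (-(s + 1)) := by positivity
        linarith
    calc z ^ n * ((n : ℝ) + y) ^ (-(s + 1))
        ≤ z ^ n * (((n : ℝ) + v / 2) ^ (-(s + 1)) + ((n : ℝ) + (v + 1)) ^ (-(s + 1))) :=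
          mul_le_mul_of_nonneg_left key (by positivity)
      _ = z ^ n * ((n : ℝ) + v / 2) ^ (-(s + 1)) + z ^ n * ((n : ℝ) + (v + 1)) ^ (-(s + 1)) := by
          ring
  have hsum0 : Summable fun n : ℕ => z ^ n / ((n : ℝ) + v) ^ s := by
    apply (lerch_aux_summable z (-s) v hz0 hz1 hv).congr
    intro n
    rw [div_eq_mul_inv, ← Real.rpow_neg (hpos n v hvt).le]
  have main : HasDerivAt (fun w : ℝ => ∑' n : ℕ, z ^ n / ((n : ℝ) + w) ^ s)
      (∑' n : ℕ, -s * (z ^ n / ((n : ℝ) + v) ^ (s + 1))) v :=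
    hasDerivAt_tsum_of_isPreconnected husum isOpen_Ioo isPreconnected_Ioo
      hderiv hbound hvt hsum0 hvt
  simp only [lerchPhi]
  exact ⟨main.differentiableAt, by rw [main.deriv]; exact tsum_mul_left⟩
end

section
/- Let z, v be real with 0 < z < 1 and v > 0. Then for every real s, the function s ↦ Φ(z,s,v) is differentiable at s and its derivative satisfies (∂Φ/∂s)(z,s,v) = −Σ_{n=0}^∞ ln(n+v) · z^n/(n+v)^s. -/
open Real Filter

/-- Key summability lemma: ((n+v)^c) * z^n is summable. -/
lemma aux_summable_rpow (z v c : ℝ) (hz0 : 0 < z) (hz1 : z < 1) (hv : 0 < v) :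
    Summable (fun n : ℕ => ((n : ℝ) + v) ^ c * z ^ n) := by
  obtain ⟨k, hk⟩ := exists_nat_ge c
  apply Summable.of_norm_bounded_eventually_nat
    (g := fun n : ℕ => (2 : ℝ) ^ k * ((n : ℝ) ^ k * z ^ n))
  · exact ((summable_pow_mul_geometric_of_norm_lt_one (R := ℝ) k
      (by rwa [Real.norm_eq_abs, abs_of_pos hz0])).mul_left _)
  · obtain ⟨N, hN⟩ := exists_nat_ge v
    filter_upwards [eventually_ge_atTop (N + 1)] with n hn
    have hn1 : (1 : ℝ) ≤ n := by
      have : 1 ≤ n := le_trans (Nat.le_add_left 1 N) hn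
      exact_mod_cast this
    have hvn : v ≤ n := le_trans hN (by exact_mod_cast le_trans (Nat.le_succ N) hn)
    have ha1 : (1 : ℝ) ≤ (n : ℝ) + v := le_trans hn1 (by linarith)
    have hbound : ((n : ℝ) + v) ^ c ≤ (2 : ℝ) ^ k * (n : ℝ) ^ k := by
      calc ((n : ℝ) + v) ^ c ≤ ((n : ℝ) + v) ^ (k : ℝ) :=
            Real.rpow_le_rpow_of_exponent_le ha1 hk
        _ = ((n : ℝ) + v) ^ k := by rw [Real.rpow_natCast]
        _ ≤ (2 * n) ^ k := by
            apply pow_le_pow_left₀ (by linarith) (by linarith)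
        _ = (2 : ℝ) ^ k * (n : ℝ) ^ k := by rw [mul_pow]
    have hz0' : (0 : ℝ) < z ^ n := pow_pos hz0 n
    rw [Real.norm_eq_abs, abs_of_nonneg (by positivity), ← mul_assoc]
    exact mul_le_mul_of_nonneg_right hbound hz0'.le

/-- Summability with a |log| factor. -/
lemma aux_summable_log_rpow (z v c : ℝ) (hz0 : 0 < z) (hz1 : z < 1) (hv : 0 < v) :
    Summable (fun n : ℕ => |Real.log ((n : ℝ) + v)| * ((n : ℝ) + v) ^ c * z ^ n) := by
  apply Summable.of_norm_bounded_eventually_nat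
    (g := fun n : ℕ => ((n : ℝ) + v) ^ (c + 1) * z ^ n)
    (aux_summable_rpow z v (c + 1) hz0 hz1 hv)
  filter_upwards [eventually_ge_atTop 1] with n hn
  have hn1 : (1 : ℝ) ≤ n := by exact_mod_cast hn
  have ha1 : (1 : ℝ) ≤ (n : ℝ) + v := by linarith
  have ha0 : (0 : ℝ) < (n : ℝ) + v := by linarith
  have hlog : |Real.log ((n : ℝ) + v)| ≤ ((n : ℝ) + v) ^ (1 : ℝ) := by
    rw [Real.rpow_one, abs_of_nonneg (Real.log_nonneg ha1)]
    exact (Real.log_le_sub_one_of_pos ha0).trans (by linarith)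
  rw [Real.norm_eq_abs, abs_of_nonneg (by positivity)]
  have : |Real.log ((n : ℝ) + v)| * ((n : ℝ) + v) ^ c ≤ ((n : ℝ) + v) ^ (c + 1) := by
    calc |Real.log ((n : ℝ) + v)| * ((n : ℝ) + v) ^ c
        ≤ ((n : ℝ) + v) ^ (1 : ℝ) * ((n : ℝ) + v) ^ c :=
          mul_le_mul_of_nonneg_right hlog (Real.rpow_nonneg ha0.le c)
      _ = ((n : ℝ) + v) ^ (c + 1) := by
          rw [← Real.rpow_add ha0]; ring_nf
  exact mul_le_mul_of_nonneg_right this (pow_pos hz0 n).le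

/-- ∂Φ/∂s (z,s,v) = −Σ_{n=0}^∞ ln(n+v) z^n/(n+v)^s. -/
theorem lerchPhi_deriv_s (z v : ℝ) (hz0 : 0 < z) (hz1 : z < 1) (hv : 0 < v) (s : ℝ) :
    DifferentiableAt ℝ (fun w : ℝ => lerchPhi z w v) s ∧
      deriv (fun w : ℝ => lerchPhi z w v) s =
        -∑' n : ℕ, Real.log ((n : ℝ) + v) * (z ^ n / ((n : ℝ) + v) ^ s) := by
  set f : ℕ → ℝ → ℝ := fun n w => z ^ n / ((n : ℝ) + v) ^ w with hf_def
  set f' : ℕ → ℝ → ℝ := fun n w =>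
    -(Real.log ((n : ℝ) + v) * (z ^ n / ((n : ℝ) + v) ^ w)) with hf'_def
  set u : ℕ → ℝ := fun n => |Real.log ((n : ℝ) + v)| *
      (((n : ℝ) + v) ^ (1 - s) + ((n : ℝ) + v) ^ (-1 - s)) * z ^ n with hu_def
  have ha0 : ∀ n : ℕ, (0 : ℝ) < (n : ℝ) + v := fun n => by positivity
  have hu : Summable u := by
    have h1 := aux_summable_log_rpow z v (1 - s) hz0 hz1 hv
    have h2 := aux_summable_log_rpow z v (-1 - s) hz0 hz1 hv
    have := h1.add h2
    apply this.congr
    intro n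
    simp only [hu_def]
    ring
  have hderiv : ∀ n : ℕ, ∀ y : ℝ, HasDerivAt (f n) (f' n y) y := by
    intro n y
    have hb := (Real.hasStrictDerivAt_const_rpow (ha0 n) y).hasDerivAt
    have hne : ((n : ℝ) + v) ^ y ≠ 0 := (Real.rpow_pos_of_pos (ha0 n) y).ne'
    have : HasDerivAt (f n) ((0 * ((n : ℝ) + v) ^ y - z ^ n * (((n : ℝ) + v) ^ y * Real.log ((n : ℝ) + v))) / (((n : ℝ) + v) ^ y) ^ 2) y := (hasDerivAt_const y (z ^ n)).div hb hne
    convert this using 1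
    simp only [hf'_def]
    field_simp
    ring
  have hbound : ∀ n : ℕ, ∀ y ∈ Set.Ioo (s - 1) (s + 1), ‖f' n y‖ ≤ u n := by
    intro n y hy
    have hay : (0 : ℝ) < ((n : ℝ) + v) ^ y := Real.rpow_pos_of_pos (ha0 n) y
    have key : ((n : ℝ) + v) ^ (-y) ≤ ((n : ℝ) + v) ^ (1 - s) + ((n : ℝ) + v) ^ (-1 - s) := by
      rcases le_or_gt 1 ((n : ℝ) + v) with h1 | h1
      · have : ((n : ℝ) + v) ^ (-y) ≤ ((n : ℝ) + v) ^ (1 - s) :=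
          Real.rpow_le_rpow_of_exponent_le h1 (by have := hy.1; linarith)
        have h2 : (0 : ℝ) ≤ ((n : ℝ) + v) ^ (-1 - s) := (Real.rpow_pos_of_pos (ha0 n) _).le
        linarith
      · have : ((n : ℝ) + v) ^ (-y) ≤ ((n : ℝ) + v) ^ (-1 - s) :=
          Real.rpow_le_rpow_of_exponent_ge (ha0 n) h1.le (by have := hy.2; linarith)
        have h2 : (0 : ℝ) ≤ ((n : ℝ) + v) ^ (1 - s) := (Real.rpow_pos_of_pos (ha0 n) _).le
        linarith
    have : ‖f' n y‖ = |Real.log ((n : ℝ) + v)| * (((n : ℝ) + v) ^ (-y)) * z ^ n := by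
      simp only [hf'_def, Real.norm_eq_abs, abs_neg, abs_mul, abs_div,
        abs_of_pos hay, abs_of_pos (pow_pos hz0 n), Real.rpow_neg (ha0 n).le]
      field_simp
    rw [this, hu_def]
    apply mul_le_mul_of_nonneg_right _ (pow_pos hz0 n).le
    exact mul_le_mul_of_nonneg_left key (abs_nonneg _)
  have hf0 : Summable fun n => f n s := by
    have := aux_summable_rpow z v (-s) hz0 hz1 hv
    apply this.congr
    intro n
    simp only [hf_def, Real.rpow_neg (ha0 n).le]
    field_simp
  have hmem : s ∈ Set.Ioo (s - 1) (s + 1) := by constructor <;> linarith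
  have key : HasDerivAt (fun w => ∑' n, f n w) (∑' n, f' n s) s :=
    hasDerivAt_tsum_of_isPreconnected hu isOpen_Ioo (isPreconnected_Ioo)
      (fun n y _ => hderiv n y) hbound hmem hf0 hmem
  have heq : (fun w : ℝ => lerchPhi z w v) = fun w => ∑' n, f n w := rfl
  rw [heq]
  refine ⟨key.differentiableAt, ?_⟩
  rw [key.deriv]
  rw [tsum_neg]
end
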